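/- arXiv:1101.2913 — 3 statements merged into one kernel-verified Lean document; each statement's English description precedes it below -/
import Mathlib

section
/- Let n ≥ 1 and suppose α > 0 is such that the log-Sobolev inequality D(f,f) ≥ α·Ent(f²) holds for every f : {-1,1}^n → ℝ. Then for every ρ ∈ (0,1] and q = 1 + ρ^{−2αn}, one has ‖T_ρ f‖_q ≤ ‖f‖₂ for every f : {-1,1}^n → ℝ. -/
noncomputable section

/-- The real value `±1` associated with a Boolean coordinate (`true ↦ 1`, `false ↦ -1`). -/
def sgn (b : Bool) : ℝ := if b then 1 else -1

/-- Expectation over the uniform probability measure on the hypercube `{-1,1}^n`,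
identified with `Fin n → Bool`. -/
def cubeExpect {n : ℕ} (f : (Fin n → Bool) → ℝ) : ℝ :=
  (∑ x : Fin n → Bool, f x) / 2 ^ n

/-- The Fourier character `χ_S(x) = ∏_{i ∈ S} x_i`. -/
def chi {n : ℕ} (S : Finset (Fin n)) (x : Fin n → Bool) : ℝ :=
  ∏ i ∈ S, sgn (x i)

/-- The Fourier coefficient `f̂(S) = E[f(x) χ_S(x)]`. -/
def fourierCoef {n : ℕ} (f : (Fin n → Bool) → ℝ) (S : Finset (Fin n)) : ℝ :=
  cubeExpect fun x => f x * chi S x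

/-- The noise operator `T_ρ f = Σ_S ρ^{|S|} f̂(S) χ_S` (with `0^0 = 1`). -/
def noiseOp {n : ℕ} (ρ : ℝ) (f : (Fin n → Bool) → ℝ) (x : Fin n → Bool) : ℝ :=
  ∑ S : Finset (Fin n), ρ ^ S.card * fourierCoef f S * chi S x

/-- The normalized `ℓ_p` norm `‖f‖_p = (E |f|^p)^{1/p}`. -/
def cubeNorm {n : ℕ} (p : ℝ) (f : (Fin n → Bool) → ℝ) : ℝ :=
  (cubeExpect fun x => |f x| ^ p) ^ (1 / p)

/-- `x` with its `i`-th coordinate negated. -/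
def flipAt {n : ℕ} (x : Fin n → Bool) (i : Fin n) : Fin n → Bool :=
  Function.update x i (!(x i))

/-- The Dirichlet form `D(f,g) = ½ E_{x,i}[(f(x) − f(x^{⊕i}))(g(x) − g(x^{⊕i}))]`,
with `x` uniform on the cube and `i` uniform on the coordinates. -/
def dirichletForm {n : ℕ} (f g : (Fin n → Bool) → ℝ) : ℝ :=
  (1/2) * cubeExpect fun x =>
    (∑ i : Fin n, (f x - f (flipAt x i)) * (g x - g (flipAt x i))) / n

/-- The entropy `Ent(g) = E[g log g] − (E g) log (E g)` (with `0 log 0 = 0`,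
as `Real.log 0 = 0`). -/
def cubeEntropy {n : ℕ} (g : (Fin n → Bool) → ℝ) : ℝ :=
  cubeExpect (fun x => g x * Real.log (g x)) - cubeExpect g * Real.log (cubeExpect g)

/-- The variance `Var(f) = E[f²] − (E f)²`. -/
def cubeVar {n : ℕ} (f : (Fin n → Bool) → ℝ) : ℝ :=
  cubeExpect (fun x => f x ^ 2) - (cubeExpect f) ^ 2

/-- The influence of coordinate `i`: `Inf_i(f) = Σ_{S ∋ i} f̂(S)²`. -/
def influence {n : ℕ} (i : Fin n) (f : (Fin n → Bool) → ℝ) : ℝ :=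
  ∑ S ∈ Finset.univ.filter (fun S : Finset (Fin n) => i ∈ S), fourierCoef f S ^ 2

/-!
Gross's semigroup argument. For positive `g` put `u_r = T_r g` and `q(r) = 1 + r^(-2αn)`, so that
`q(1) = 2` and `r q'(r) = -2αn (q(r) - 1)`. The noise semigroup satisfies the heat equation
`2 r ∂_r u = ∑_i (u - u ∘ flip_i)`, so `r` times the derivative of `Φ(r) = log E[u^q] / q`, up to a
positive factor, is `(q²/2) n D(u, u^(q-1)) - 2αn (q - 1) Ent(u^q)`. The Stroock–Varopoulos
inequality `D(u, u^(q-1)) ≥ 4(q-1)/q² D(u^(q/2), u^(q/2))` and the log-Sobolev inequality for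
`u^(q/2)` make it nonnegative, hence `‖T_ρ g‖_{q(ρ)} = exp Φ(ρ) ≤ exp Φ(1) = ‖g‖₂`. A general `f`
is handled through `|T_ρ f| ≤ T_ρ (|f| + ε)` and `ε → 0`.
-/

open Finset Filter Topology

lemma sgn_not (b : Bool) : sgn (!b) = -sgn b := by cases b <;> simp [sgn]

lemma sgn_mul_self (b : Bool) : sgn b * sgn b = 1 := by cases b <;> norm_num [sgn]

section Cube

variable {n : ℕ}

lemma flipAt_apply (x : Fin n → Bool) (i j : Fin n) :
    flipAt x i j = if j = i then !(x i) else x j := by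
  simp [flipAt, Function.update]

lemma flipAt_flipAt (x : Fin n → Bool) (i : Fin n) : flipAt (flipAt x i) i = x := by
  funext j
  by_cases h : j = i <;> simp [flipAt_apply, h]

lemma sum_comp_flipAt {M : Type*} [AddCommMonoid M] (h : (Fin n → Bool) → M) (i : Fin n) :
    ∑ x, h (flipAt x i) = ∑ x, h x :=
  Equiv.sum_comp (Function.Involutive.toPerm (flipAt · i) (flipAt_flipAt · i)) h

lemma cubeExpect_mono {f g : (Fin n → Bool) → ℝ} (h : ∀ x, f x ≤ g x) :
    cubeExpect f ≤ cubeExpect g :=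
  div_le_div_of_nonneg_right (sum_le_sum fun x _ => h x) (by positivity)

lemma cubeExpect_nonneg {f : (Fin n → Bool) → ℝ} (h : ∀ x, 0 ≤ f x) : 0 ≤ cubeExpect f :=
  div_nonneg (sum_nonneg fun x _ => h x) (by positivity)

lemma cubeExpect_pos {f : (Fin n → Bool) → ℝ} (h : ∀ x, 0 < f x) : 0 < cubeExpect f :=
  div_pos (sum_pos (fun x _ => h x) univ_nonempty) (by positivity)

lemma cubeExpect_add (f g : (Fin n → Bool) → ℝ) :
    cubeExpect (fun x => f x + g x) = cubeExpect f + cubeExpect g := by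
  simp only [cubeExpect, sum_add_distrib, add_div]

lemma cubeExpect_sub (f g : (Fin n → Bool) → ℝ) :
    cubeExpect (fun x => f x - g x) = cubeExpect f - cubeExpect g := by
  simp only [cubeExpect, sum_sub_distrib, sub_div]

lemma cubeExpect_const_mul (c : ℝ) (f : (Fin n → Bool) → ℝ) :
    cubeExpect (fun x => c * f x) = c * cubeExpect f := by
  simp only [cubeExpect, ← mul_sum, mul_div_assoc]

lemma cubeExpect_sum {ι : Type*} (s : Finset ι) (h : ι → (Fin n → Bool) → ℝ) :
    cubeExpect (fun x => ∑ i ∈ s, h i x) = ∑ i ∈ s, cubeExpect (h i) := by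
  simp only [cubeExpect, sum_comm (s := s), sum_div]

lemma cubeExpect_comp_flipAt (h : (Fin n → Bool) → ℝ) (i : Fin n) :
    cubeExpect (fun x => h (flipAt x i)) = cubeExpect h := by
  rw [cubeExpect, sum_comp_flipAt h i, cubeExpect]

lemma hasDerivAt_cubeExpect {F : ℝ → (Fin n → Bool) → ℝ} {F' : (Fin n → Bool) → ℝ} {r : ℝ}
    (hF : ∀ x, HasDerivAt (F · x) (F' x) r) :
    HasDerivAt (fun s => cubeExpect (F s)) (cubeExpect F') r :=
  (HasDerivAt.fun_sum fun x _ => hF x).div_const _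

lemma chi_flipAt (S : Finset (Fin n)) (x : Fin n → Bool) (i : Fin n) :
    chi S (flipAt x i) = (if i ∈ S then -1 else 1) * chi S x := by
  have hj : ∀ j ∈ S.erase i, sgn (flipAt x i j) = sgn (x j) := fun j hj => by
    rw [flipAt_apply, if_neg (ne_of_mem_erase hj)]
  split_ifs with hi
  · rw [chi, chi, ← mul_prod_erase _ _ hi, ← mul_prod_erase _ _ hi, prod_congr rfl hj,
      flipAt_apply, if_pos rfl, sgn_not]
    ring
  · rw [one_mul, chi, chi, ← erase_eq_of_notMem hi, prod_congr rfl hj]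

lemma sum_chi_eq_zero {S : Finset (Fin n)} (hS : S.Nonempty) : ∑ y, chi S y = 0 := by
  obtain ⟨i, hi⟩ := hS
  have h := sum_comp_flipAt (chi S) i
  simp only [chi_flipAt, if_pos hi, neg_one_mul, sum_neg_distrib] at h
  linarith

end Cube

section StroockVaropoulos

variable {q : ℝ}

-- a primitive of `(c - (q/2) t^(q/2-1))²` on `(0, ∞)`
lemma monotoneOn_primitive_sq_sub_rpow (hq : 1 < q) (c : ℝ) :
    MonotoneOn (fun t : ℝ => c ^ 2 * t - 2 * c * t ^ (q / 2) + q ^ 2 / (4 * (q - 1)) * t ^ (q - 1))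
      (Set.Ioi 0) := by
  have hderiv : ∀ t : ℝ, 0 < t → HasDerivAt
      (fun t : ℝ => c ^ 2 * t - 2 * c * t ^ (q / 2) + q ^ 2 / (4 * (q - 1)) * t ^ (q - 1))
      ((c - q / 2 * t ^ (q / 2 - 1)) ^ 2) t := by
    intro t ht
    have hsq : t ^ (q - 1 - 1) = (t ^ (q / 2 - 1)) ^ 2 := by
      rw [← Real.rpow_mul_natCast ht.le]; ring_nf
    refine ((((hasDerivAt_id t).const_mul (c ^ 2)).sub
      ((Real.hasDerivAt_rpow_const (p := q / 2) (Or.inl ht.ne')).const_mul (2 * c))).add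
      ((Real.hasDerivAt_rpow_const (p := q - 1) (Or.inl ht.ne')).const_mul
        (q ^ 2 / (4 * (q - 1))))).congr_deriv ?_
    rw [hsq]
    field_simp [(sub_pos.mpr hq).ne']
    ring
  refine monotoneOn_of_deriv_nonneg (convex_Ioi 0)
    (fun t ht => (hderiv t ht).continuousAt.continuousWithinAt)
    (fun t ht => (hderiv t (interior_subset ht)).differentiableAt.differentiableWithinAt)
    fun t ht => ?_
  rw [(hderiv t (interior_subset ht)).deriv]
  positivity

/-- The Stroock–Varopoulos inequality, i.e. Cauchy–Schwarz for `∫_b^a (d/dt) t^(q/2) dt`: for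
`b ≤ a` the monotone primitive above makes the quadratic in `c` nonnegative, and its discriminant
is the claim. -/
lemma stroockVaropoulos (hq : 1 < q) {a b : ℝ} (ha : 0 < a) (hb : 0 < b) :
    4 * (q - 1) / q ^ 2 * (a ^ (q / 2) - b ^ (q / 2)) ^ 2
      ≤ (a - b) * (a ^ (q - 1) - b ^ (q - 1)) := by
  wlog hba : b ≤ a generalizing a b
  · have := this hb ha (le_of_not_ge hba)
    linarith [show (a - b) * (a ^ (q - 1) - b ^ (q - 1)) = (b - a) * (b ^ (q - 1) - a ^ (q - 1))
      by ring, show (a ^ (q / 2) - b ^ (q / 2)) ^ 2 = (b ^ (q / 2) - a ^ (q / 2)) ^ 2 by ring]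
  have hdisc := discrim_le_zero (K := ℝ) (a := a - b) (b := -2 * (a ^ (q / 2) - b ^ (q / 2)))
    (c := q ^ 2 / (4 * (q - 1)) * (a ^ (q - 1) - b ^ (q - 1))) fun c => by
      have := monotoneOn_primitive_sq_sub_rpow hq c hb ha hba
      linarith
  have hq1 : 0 < q - 1 := sub_pos.mpr hq
  rw [discrim] at hdisc
  rw [div_mul_eq_mul_div, div_le_iff₀ (by positivity)]
  field_simp at hdisc
  nlinarith

end StroockVaropoulos

section NoiseKernel

variable {n : ℕ}

def noiseKer (r : ℝ) (x y : Fin n → Bool) : ℝ :=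
  ∏ i, (1 + r * (sgn (x i) * sgn (y i)))

lemma noiseKer_eq_sum (r : ℝ) (x y : Fin n → Bool) :
    noiseKer r x y = ∑ S : Finset (Fin n), r ^ S.card * chi S x * chi S y := by
  classical
  simp_rw [noiseKer, add_comm (1 : ℝ), Fintype.prod_add, prod_const_one, mul_one,
    prod_mul_distrib, prod_const, chi, mul_assoc]

lemma noiseKer_nonneg {r : ℝ} (h0 : 0 ≤ r) (h1 : r ≤ 1) (x y : Fin n → Bool) :
    0 ≤ noiseKer r x y := by
  refine prod_nonneg fun i _ => ?_
  cases x i <;> cases y i <;> norm_num [sgn] <;> linarith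

lemma noiseKer_one (x y : Fin n → Bool) :
    noiseKer 1 x y = if x = y then 2 ^ n else 0 := by
  split_ifs with h
  · simp [noiseKer, h, sgn_mul_self, one_add_one_eq_two]
  · obtain ⟨i, hi⟩ := Function.ne_iff.mp h
    refine prod_eq_zero (mem_univ i) ?_
    cases hx : x i <;> cases hy : y i <;> simp_all [sgn]

lemma cubeExpect_noiseKer (r : ℝ) (x : Fin n → Bool) :
    cubeExpect (noiseKer r x) = 1 := by
  have hS : ∀ S : Finset (Fin n), ∑ y, r ^ S.card * chi S x * chi S y
      = if S = ∅ then 2 ^ n else 0 := by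
    intro S
    rcases S.eq_empty_or_nonempty with rfl | hne
    · simp [chi]
    · rw [if_neg hne.ne_empty, ← mul_sum, sum_chi_eq_zero hne, mul_zero]
  rw [cubeExpect, sum_congr rfl fun y _ => noiseKer_eq_sum r x y, sum_comm,
    sum_congr rfl fun S _ => hS S, sum_ite_eq' univ ∅, if_pos (mem_univ _),
    div_self (pow_ne_zero n two_ne_zero)]

lemma noiseOp_eq_cubeExpect_mul_noiseKer (r : ℝ) (f : (Fin n → Bool) → ℝ) (x : Fin n → Bool) :
    noiseOp r f x = cubeExpect fun y => f y * noiseKer r x y := by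
  simp_rw [noiseKer_eq_sum, mul_sum]
  rw [cubeExpect_sum]
  refine sum_congr rfl fun S _ => ?_
  rw [fourierCoef, mul_right_comm, ← cubeExpect_const_mul]
  congr 1; funext y; ring

lemma noiseOp_one (f : (Fin n → Bool) → ℝ) (x : Fin n → Bool) : noiseOp 1 f x = f x := by
  simp [noiseOp_eq_cubeExpect_mul_noiseKer, noiseKer_one, cubeExpect]

variable {r : ℝ}

lemma noiseOp_mono (h0 : 0 ≤ r) (h1 : r ≤ 1) {f g : (Fin n → Bool) → ℝ} (h : ∀ x, f x ≤ g x)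
    (x : Fin n → Bool) : noiseOp r f x ≤ noiseOp r g x := by
  simp only [noiseOp_eq_cubeExpect_mul_noiseKer]
  exact cubeExpect_mono fun y => mul_le_mul_of_nonneg_right (h y) (noiseKer_nonneg h0 h1 x y)

lemma noiseOp_const (c : ℝ) (x : Fin n → Bool) : noiseOp r (fun _ => c) x = c := by
  rw [noiseOp_eq_cubeExpect_mul_noiseKer, cubeExpect_const_mul, cubeExpect_noiseKer, mul_one]

lemma noiseOp_neg (f : (Fin n → Bool) → ℝ) (x : Fin n → Bool) :
    noiseOp r (fun y => -f y) x = -noiseOp r f x := by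
  simp only [noiseOp_eq_cubeExpect_mul_noiseKer, neg_mul]
  rw [← neg_one_mul, ← cubeExpect_const_mul]
  simp

lemma abs_noiseOp_le (h0 : 0 ≤ r) (h1 : r ≤ 1) {f g : (Fin n → Bool) → ℝ}
    (h : ∀ x, |f x| ≤ g x) (x : Fin n → Bool) : |noiseOp r f x| ≤ noiseOp r g x := by
  rw [abs_le, neg_le, ← noiseOp_neg]
  exact ⟨noiseOp_mono h0 h1 (fun y => (neg_le_abs (f y)).trans (h y)) x,
    noiseOp_mono h0 h1 (fun y => (le_abs_self (f y)).trans (h y)) x⟩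

lemma noiseOp_pos (h0 : 0 ≤ r) (h1 : r ≤ 1) {g : (Fin n → Bool) → ℝ} (hg : ∀ x, 0 < g x)
    (x : Fin n → Bool) : 0 < noiseOp r g x := by
  obtain ⟨y, -, hy⟩ := exists_min_image univ g univ_nonempty
  calc 0 < g y := hg y
    _ = noiseOp r (fun _ => g y) x := (noiseOp_const _ x).symm
    _ ≤ noiseOp r g x := noiseOp_mono h0 h1 (fun z => hy z (mem_univ z)) x

end NoiseKernel

section Dirichlet

variable {n : ℕ}

lemma cubeExpect_mul_sub_flipAt (f g : (Fin n → Bool) → ℝ) (i : Fin n) :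
    cubeExpect (fun x => (f x - f (flipAt x i)) * (g x - g (flipAt x i)))
      = 2 * cubeExpect (fun x => (f x - f (flipAt x i)) * g x) := by
  have hflip : cubeExpect (fun x => (f x - f (flipAt x i)) * g (flipAt x i))
      = -cubeExpect (fun x => (f x - f (flipAt x i)) * g x) := by
    rw [← cubeExpect_comp_flipAt _ i, ← neg_one_mul, ← cubeExpect_const_mul]
    congr 1; funext x; rw [flipAt_flipAt]; ring
  simp_rw [mul_sub]
  rw [cubeExpect_sub, hflip]
  ring

lemma natCast_mul_dirichletForm (f g : (Fin n → Bool) → ℝ) :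
    n * dirichletForm f g = cubeExpect fun x => (∑ i, (f x - f (flipAt x i))) * g x := by
  rcases n.eq_zero_or_pos with rfl | hn
  · simp [cubeExpect]
  simp_rw [dirichletForm, div_eq_inv_mul, cubeExpect_const_mul, cubeExpect_sum,
    cubeExpect_mul_sub_flipAt, sum_mul, cubeExpect_sum, ← mul_sum]
  field_simp

lemma dirichletForm_rpow_le {q : ℝ} (hq : 1 < q) {u : (Fin n → Bool) → ℝ} (hu : ∀ x, 0 < u x) :
    4 * (q - 1) / q ^ 2 * dirichletForm (fun x => u x ^ (q / 2)) (fun x => u x ^ (q / 2))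
      ≤ dirichletForm u (fun x => u x ^ (q - 1)) := by
  rw [dirichletForm, dirichletForm, mul_left_comm, ← cubeExpect_const_mul]
  gcongr 1 / 2 * ?_
  refine cubeExpect_mono fun x => ?_
  rw [mul_div_assoc', mul_sum]
  gcongr ?_ / _
  refine sum_le_sum fun i _ => ?_
  rw [← sq]
  exact stroockVaropoulos hq (hu x) (hu _)

end Dirichlet

section NoiseFlow

variable {n : ℕ}

def noiseOpDeriv (r : ℝ) (f : (Fin n → Bool) → ℝ) (x : Fin n → Bool) : ℝ :=
  ∑ S : Finset (Fin n), (S.card * r ^ (S.card - 1)) * fourierCoef f S * chi S x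

lemma hasDerivAt_noiseOp (f : (Fin n → Bool) → ℝ) (x : Fin n → Bool) (r : ℝ) :
    HasDerivAt (noiseOp · f x) (noiseOpDeriv r f x) r :=
  HasDerivAt.fun_sum fun S _ => ((hasDerivAt_pow S.card r).mul_const _).mul_const _

lemma sum_noiseOp_sub_noiseOp_flipAt (r : ℝ) (f : (Fin n → Bool) → ℝ) (x : Fin n → Bool) :
    ∑ i, (noiseOp r f x - noiseOp r f (flipAt x i)) = 2 * r * noiseOpDeriv r f x := by
  have hterm : ∀ S : Finset (Fin n),
      ∑ i, (r ^ S.card * fourierCoef f S * chi S x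
        - r ^ S.card * fourierCoef f S * chi S (flipAt x i))
      = 2 * r * ((S.card * r ^ (S.card - 1)) * fourierCoef f S * chi S x) := by
    intro S
    have hflip : ∀ i, r ^ S.card * fourierCoef f S * chi S x
        - r ^ S.card * fourierCoef f S * chi S (flipAt x i)
        = (if i ∈ S then 2 else 0) * (r ^ S.card * fourierCoef f S * chi S x) := by
      intro i; rw [chi_flipAt]; split_ifs <;> ring
    rw [sum_congr rfl fun i _ => hflip i, ← sum_mul, sum_ite_mem, univ_inter, sum_const,
      nsmul_eq_mul]
    rcases S.eq_empty_or_nonempty with rfl | hS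
    · simp
    rw [← pow_sub_one_mul (card_pos.mpr hS).ne']
    ring
  simp_rw [noiseOp, ← sum_sub_distrib]
  rw [sum_comm, noiseOpDeriv, mul_sum]
  exact sum_congr rfl fun S _ => hterm S

end NoiseFlow

section CubeNorm

variable {n : ℕ}

lemma cubeNorm_mono {p : ℝ} (hp : 0 ≤ p) {f g : (Fin n → Bool) → ℝ} (h : ∀ x, |f x| ≤ |g x|) :
    cubeNorm p f ≤ cubeNorm p g := by
  unfold cubeNorm
  gcongr
  · exact cubeExpect_nonneg fun x => by positivity
  · exact cubeExpect_mono fun x => Real.rpow_le_rpow (abs_nonneg _) (h x) hp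

lemma continuous_cubeNorm_abs_add {p : ℝ} (hp : 0 ≤ p) (f : (Fin n → Bool) → ℝ) :
    Continuous fun ε : ℝ => cubeNorm p fun x => |f x| + ε := by
  unfold cubeNorm cubeExpect
  refine (((continuous_finsetSum _ fun x _ => ?_).div_const _).rpow_const
    fun _ => Or.inr (by positivity))
  exact (continuous_const.add continuous_id).abs.rpow_const fun _ => Or.inr hp

lemma cubeNorm_eq_exp_log_div {p : ℝ} {u : (Fin n → Bool) → ℝ} (hu : ∀ x, 0 < u x) :
    cubeNorm p u = Real.exp (Real.log (cubeExpect fun x => u x ^ p) / p) := by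
  simp_rw [cubeNorm, abs_of_pos (hu _),
    Real.rpow_def_of_pos (cubeExpect_pos fun x => Real.rpow_pos_of_pos (hu x) p), mul_one_div]

end CubeNorm

section Gross

variable {n : ℕ} {α : ℝ}

/-- Gross's differential inequality `d/dr (log E[u^q] / q) ≥ 0`, multiplied through by
`q² E[u^q]`, with `u' = ∂_r u` and `q' = dq/dr`. -/
lemma gross_differential_inequality
    (hLS : ∀ f : (Fin n → Bool) → ℝ, α * cubeEntropy (fun x => f x ^ 2) ≤ dirichletForm f f)
    {r q q' : ℝ} (hr : 0 < r) (hq : 1 < q) (hq' : r * q' = -(2 * α * n) * (q - 1))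
    {u u' : (Fin n → Bool) → ℝ} (hu : ∀ x, 0 < u x)
    (hflow : ∀ x, ∑ i, (u x - u (flipAt x i)) = 2 * r * u' x) :
    q' * (cubeExpect fun x => u x ^ q) * Real.log (cubeExpect fun x => u x ^ q)
      ≤ q * cubeExpect fun x => u' x * q * u x ^ (q - 1) + q' * u x ^ q * Real.log (u x) := by
  set F := cubeExpect fun x => u x ^ q
  set E₁ := cubeExpect fun x => u' x * u x ^ (q - 1)
  set E₂ := cubeExpect fun x => u x ^ q * Real.log (u x)
  set w : (Fin n → Bool) → ℝ := fun x => u x ^ (q / 2)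
  have hw : ∀ x, w x ^ 2 = u x ^ q := fun x => by
    rw [← Real.rpow_mul_natCast (hu x).le]; ring_nf
  have hent : cubeEntropy (fun x => w x ^ 2) = q * E₂ - F * Real.log F := by
    simp_rw [cubeEntropy, hw, Real.log_rpow (hu _), mul_left_comm _ q, cubeExpect_const_mul]
    rfl
  have hflowD : 2 * r * E₁ = n * dirichletForm u fun x => u x ^ (q - 1) := by
    simp_rw [natCast_mul_dirichletForm, hflow, E₁, ← cubeExpect_const_mul, mul_assoc]
  have hexpand : (cubeExpect fun x => u' x * q * u x ^ (q - 1) + q' * u x ^ q * Real.log (u x))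
      = q * E₁ + q' * E₂ := by
    simp_rw [cubeExpect_add, mul_right_comm _ q, mul_comm _ q, mul_assoc, cubeExpect_const_mul]
    rfl
  have key : 0 ≤ r * (q * (q * E₁ + q' * E₂) - q' * F * Real.log F) := by
    calc 0 ≤ 2 * n * (q - 1) * (dirichletForm w w - α * cubeEntropy fun x => w x ^ 2) :=
          mul_nonneg (by have := sub_pos.mpr hq; positivity) (sub_nonneg.mpr (hLS w))
      _ = q ^ 2 / 2 * n * (4 * (q - 1) / q ^ 2 * dirichletForm w w)
            - 2 * α * n * (q - 1) * cubeEntropy fun x => w x ^ 2 := by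
          field_simp; ring
      _ ≤ q ^ 2 / 2 * n * dirichletForm u (fun x => u x ^ (q - 1))
            - 2 * α * n * (q - 1) * cubeEntropy fun x => w x ^ 2 := by
          gcongr; exact dirichletForm_rpow_le hq hu
      _ = r * (q * (q * E₁ + q' * E₂) - q' * F * Real.log F) := by
          rw [hent]
          linear_combination (-(q ^ 2 / 2)) * hflowD - (q * E₂ - F * Real.log F) * hq'
  rw [hexpand]
  linarith [(mul_nonneg_iff_of_pos_left hr).mp key]

lemma monotoneOn_log_cubeExpect_noiseOp_rpow_div
    (hLS : ∀ f : (Fin n → Bool) → ℝ, α * cubeEntropy (fun x => f x ^ 2) ≤ dirichletForm f f)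
    {g : (Fin n → Bool) → ℝ} (hg : ∀ x, 0 < g x) :
    MonotoneOn (fun r => Real.log (cubeExpect fun x => noiseOp r g x ^ (1 + r ^ (-(2 * α * n))))
      / (1 + r ^ (-(2 * α * n)))) (Set.Ioc 0 1) := by
  set c := 2 * α * n
  set q : ℝ → ℝ := fun r => 1 + r ^ (-c)
  set q' : ℝ → ℝ := fun r => -c * r ^ (-c - 1)
  set F : ℝ → ℝ := fun r => cubeExpect fun x => noiseOp r g x ^ q r
  set F' : ℝ → ℝ := fun r => cubeExpect fun x =>
    noiseOpDeriv r g x * q r * noiseOp r g x ^ (q r - 1)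
      + q' r * noiseOp r g x ^ q r * Real.log (noiseOp r g x)
  have hu : ∀ r ∈ Set.Ioc (0 : ℝ) 1, ∀ x, 0 < noiseOp r g x := fun r hr =>
    noiseOp_pos hr.1.le hr.2 hg
  have hq : ∀ r ∈ Set.Ioc (0 : ℝ) 1, 1 < q r := fun r hr =>
    lt_add_of_pos_right 1 (Real.rpow_pos_of_pos hr.1 _)
  have hq' : ∀ r ∈ Set.Ioc (0 : ℝ) 1, r * q' r = -c * (q r - 1) := fun r hr => by
    simp only [q, q', Real.rpow_sub_one hr.1.ne']
    field_simp [hr.1.ne']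
    ring
  have hF : ∀ r ∈ Set.Ioc (0 : ℝ) 1, 0 < F r := fun r hr =>
    cubeExpect_pos fun x => Real.rpow_pos_of_pos (hu r hr x) _
  have hderiv : ∀ r ∈ Set.Ioc (0 : ℝ) 1, HasDerivAt (fun r => Real.log (F r) / q r)
      ((F' r / F r * q r - Real.log (F r) * q' r) / q r ^ 2) r := by
    intro r hr
    have hqr : HasDerivAt q (q' r) r :=
      (Real.hasDerivAt_rpow_const (Or.inl hr.1.ne')).const_add 1
    have hFr : HasDerivAt F (F' r) r :=
      hasDerivAt_cubeExpect fun x => (hasDerivAt_noiseOp g x r).rpow hqr (hu r hr x)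
    exact (hFr.log (hF r hr).ne').div hqr (by linarith [hq r hr])
  have hderiv_nonneg : ∀ r ∈ Set.Ioc (0 : ℝ) 1,
      0 ≤ (F' r / F r * q r - Real.log (F r) * q' r) / q r ^ 2 := by
    intro r hr
    have := gross_differential_inequality hLS hr.1 (hq r hr) (hq' r hr) (hu r hr)
      (sum_noiseOp_sub_noiseOp_flipAt r g)
    have hFr := hF r hr
    refine div_nonneg ?_ (sq_nonneg _)
    rw [div_mul_eq_mul_div, sub_nonneg, le_div_iff₀ hFr]
    linarith
  refine monotoneOn_of_deriv_nonneg (convex_Ioc 0 1)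
    (fun r hr => (hderiv r hr).continuousAt.continuousWithinAt)
    (fun r hr => (hderiv r (interior_subset hr)).differentiableAt.differentiableWithinAt)
    fun r hr => ?_
  rw [(hderiv r (interior_subset hr)).deriv]
  exact hderiv_nonneg r (interior_subset hr)

lemma cubeNorm_noiseOp_le_of_pos
    (hLS : ∀ f : (Fin n → Bool) → ℝ, α * cubeEntropy (fun x => f x ^ 2) ≤ dirichletForm f f)
    {ρ : ℝ} (hρ0 : 0 < ρ) (hρ1 : ρ ≤ 1) {g : (Fin n → Bool) → ℝ} (hg : ∀ x, 0 < g x) :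
    cubeNorm (1 + ρ ^ (-(2 * α * n))) (noiseOp ρ g) ≤ cubeNorm 2 g := by
  have h := monotoneOn_log_cubeExpect_noiseOp_rpow_div hLS hg ⟨hρ0, hρ1⟩ ⟨one_pos, le_rfl⟩ hρ1
  have hg1 : noiseOp 1 g = g := funext (noiseOp_one g)
  simp only [Real.one_rpow, one_add_one_eq_two, hg1] at h
  rw [cubeNorm_eq_exp_log_div (noiseOp_pos hρ0.le hρ1 hg), cubeNorm_eq_exp_log_div hg]
  exact Real.exp_le_exp.mpr h

end Gross

theorem logSobolev_implies_hypercontractivity_general (n : ℕ) (α : ℝ)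
    (hLS : ∀ f : (Fin n → Bool) → ℝ, α * cubeEntropy (fun x => f x ^ 2) ≤ dirichletForm f f) :
    ∀ ρ : ℝ, 0 < ρ → ρ ≤ 1 → ∀ f : (Fin n → Bool) → ℝ,
      cubeNorm (1 + ρ ^ (-(2 * α * (n : ℝ)))) (noiseOp ρ f) ≤ cubeNorm 2 f := by
  intro ρ hρ0 hρ1 f
  have hq : 0 ≤ 1 + ρ ^ (-(2 * α * (n : ℝ))) := by positivity
  have hlim : Tendsto (fun ε : ℝ => cubeNorm 2 fun x => |f x| + ε) (𝓝[>] 0) (𝓝 (cubeNorm 2 f)) := by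
    have h := ((continuous_cubeNorm_abs_add zero_le_two f).tendsto 0).mono_left
      (nhdsWithin_le_nhds (s := Set.Ioi 0))
    simpa only [add_zero, abs_abs, cubeNorm] using h
  refine ge_of_tendsto hlim (eventually_nhdsWithin_of_forall fun ε (hε : 0 < ε) => ?_)
  have hpos : ∀ x, 0 < |f x| + ε := fun x => by positivity
  calc cubeNorm (1 + ρ ^ (-(2 * α * (n : ℝ)))) (noiseOp ρ f)
      ≤ cubeNorm (1 + ρ ^ (-(2 * α * (n : ℝ)))) (noiseOp ρ fun x => |f x| + ε) :=
        cubeNorm_mono hq fun x => (abs_noiseOp_le hρ0.le hρ1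
          (fun y => le_add_of_nonneg_right hε.le) x).trans (le_abs_self _)
    _ ≤ cubeNorm 2 fun x => |f x| + ε := cubeNorm_noiseOp_le_of_pos hLS hρ0 hρ1 hpos

/-- **Gross's theorem (log-Sobolev implies hypercontractivity), `p = 2` case**:
if `α > 0` is such that `D(f,f) ≥ α·Ent(f²)` for every `f : {-1,1}^n → ℝ`, then for every
`ρ ∈ (0,1]` and `q = 1 + ρ^{−2αn}` one has `‖T_ρ f‖_q ≤ ‖f‖₂` for every `f`. -/
theorem logSobolev_implies_hypercontractivity (n : ℕ) (hn : 1 ≤ n) (α : ℝ) (hα : 0 < α)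
    (hLS : ∀ f : (Fin n → Bool) → ℝ, α * cubeEntropy (fun x => f x ^ 2) ≤ dirichletForm f f) :
    ∀ ρ : ℝ, 0 < ρ → ρ ≤ 1 → ∀ f : (Fin n → Bool) → ℝ,
      cubeNorm (1 + ρ ^ (-(2 * α * (n : ℝ)))) (noiseOp ρ f) ≤ cubeNorm 2 f :=
  logSobolev_implies_hypercontractivity_general n α hLS
end
end

section
/- For all real numbers a > b ≥ 0 and every real q ≥ 2, one has (a^{q−1} − b^{q−1})(a − b) ≥ (4(q−1)/q²) · (a^{q/2} − b^{q/2})². -/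
/-!
Write `p = q / 2`. Since `a ^ p - b ^ p = p ∫_b^a t ^ (p - 1) dt` and
`a ^ (q - 1) - b ^ (q - 1) = (q - 1) ∫_b^a (t ^ (p - 1)) ^ 2 dt`, the inequality is the
Cauchy–Schwarz inequality `(∫_b^a g) ^ 2 ≤ (a - b) ∫_b^a g ^ 2` for `g t = t ^ (p - 1)`.
-/

open intervalIntegral
open MeasureTheory (volume)

lemma sq_intervalIntegral_le_mul_intervalIntegral_sq {f : ℝ → ℝ} {a b : ℝ} (hab : a ≤ b)
    (hf : IntervalIntegrable f volume a b)
    (hf2 : IntervalIntegrable (fun t => f t ^ 2) volume a b) :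
    (∫ t in a..b, f t) ^ 2 ≤ (b - a) * ∫ t in a..b, f t ^ 2 := by
  rcases hab.eq_or_lt with rfl | hlt
  · simp
  set I := ∫ t in a..b, f t
  set S := ∫ t in a..b, f t ^ 2
  have expand : (∫ t in a..b, ((b - a) * f t - I) ^ 2)
      = (b - a) * ((b - a) * S - I ^ 2) := by
    have hsq : (fun t => ((b - a) * f t - I) ^ 2)
        = fun t => (b - a) ^ 2 * f t ^ 2 - (2 * (b - a) * I) * f t + I ^ 2 := by
      funext t; ring
    rw [hsq, integral_add ((hf2.const_mul _).sub (hf.const_mul _)) intervalIntegrable_const,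
      integral_sub (hf2.const_mul _) (hf.const_mul _), integral_const_mul, integral_const_mul,
      integral_const, smul_eq_mul]
    ring
  have hnonneg : 0 ≤ (b - a) * ((b - a) * S - I ^ 2) :=
    expand ▸ integral_nonneg hab fun t _ => sq_nonneg _
  nlinarith [(mul_nonneg_iff_of_pos_left (sub_pos.2 hlt)).1 hnonneg]

lemma sq_rpow_sub_rpow_le {a b p : ℝ} (hb : 0 ≤ b) (hab : b ≤ a) (hp : 1 / 2 < p) :
    (2 * p - 1) * (a ^ p - b ^ p) ^ 2 ≤
      p ^ 2 * ((a - b) * (a ^ (2 * p - 1) - b ^ (2 * p - 1))) := by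
  have h2p : 0 < 2 * p - 1 := by linarith
  have hintegral : ∫ t in b..a, t ^ (p - 1) = (a ^ p - b ^ p) / p := by
    rw [integral_rpow (Or.inl (by linarith))]
    norm_num
  have hsq : Set.EqOn (fun t : ℝ => (t ^ (p - 1)) ^ 2) (fun t => t ^ (2 * p - 2))
      (Set.uIcc b a) := by
    intro t ht
    rw [Set.uIcc_of_le hab] at ht
    dsimp only
    rw [← Real.rpow_natCast, ← Real.rpow_mul (hb.trans ht.1)]
    ring_nf
  have hintegral_sq :
      ∫ t in b..a, (t ^ (p - 1)) ^ 2 = (a ^ (2 * p - 1) - b ^ (2 * p - 1)) / (2 * p - 1) := by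
    rw [integral_congr hsq, integral_rpow (Or.inl (by linarith))]
    ring_nf
  have hcs := sq_intervalIntegral_le_mul_intervalIntegral_sq hab
    (intervalIntegrable_rpow' (r := p - 1) (by linarith))
    ((intervalIntegrable_rpow' (r := 2 * p - 2) (by linarith)).congr
      (hsq.symm.mono Set.uIoc_subset_uIcc))
  rw [hintegral, hintegral_sq, div_pow, div_le_iff₀ (by positivity), mul_div_assoc',
    div_mul_eq_mul_div, le_div_iff₀ h2p] at hcs
  linarith

/-- **Pointwise convexity inequality**: for real `a > b ≥ 0` and `q ≥ 2`,
`(a^{q−1} − b^{q−1})(a − b) ≥ (4(q−1)/q²)(a^{q/2} − b^{q/2})²`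
(real powers of nonnegative reals). -/
theorem pow_diff_mul_diff_ge (a b q : ℝ) (hb : 0 ≤ b) (hab : b < a) (hq : 2 ≤ q) :
    (4 * (q - 1) / q ^ 2) * (a ^ (q / 2) - b ^ (q / 2)) ^ 2 ≤
      (a ^ (q - 1) - b ^ (q - 1)) * (a - b) := by
  have key := sq_rpow_sub_rpow_le hb hab.le (p := q / 2) (by linarith)
  rw [show 2 * (q / 2) - 1 = q - 1 by ring] at key
  rw [div_mul_eq_mul_div, div_le_iff₀ (by positivity)]
  nlinarith [key]
end

section
/- (Friedgut's junta theorem) There exists a universal constant C > 0 such that for every n ≥ 1, every f : {-1,1}^n → {-1,1}, and every ε ∈ (0,1), there exist a set J ⊆ {1,…,n} with |J| ≤ exp(C·Inf(f)/ε) and a function g : {-1,1}^n → {-1,1} depending only on the coordinates in J, such that E|f − g| ≤ ε. -/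
noncomputable section

/-!
Let `J` be the set of coordinates of influence at least `τ`, let `h` be the part of the Fourier
expansion of `f` on the sets `S ⊆ J` with `|S| ≤ k`, and let `g = sign h`. Since `f = ±1`,
`E|f - g| ≤ 2 E(f - h)²`, the Fourier weight of `f` outside those sets. The weight above degree
`k` is at most `Inf(f)/k`. A set `S ⊄ J` with `|S| ≤ k` contains some `i ∉ J`, so the remaining
weight is at most `Σ_{i ∉ J} W_i`, where `W_i` is the weight on the sets of size `≤ k`
containing `i`. Bonami's lemma (`‖p‖₄ ≤ √3^k ‖p‖₂` for `p` of degree `≤ k`), applied to the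
degree-`≤ k` part of `D_i f`, gives `W_i ≤ 3^k Inf_i(f)^{3/2} ≤ 3^k √τ Inf_i(f)`.
Taking `k ≈ 4 Inf(f)/ε` and `√τ = ε / (4·3^k Inf(f))` makes both parts at most `ε/4`, and
`|J| ≤ Inf(f)/τ = exp(O(Inf(f)/ε))`. When `Inf(f) ≤ ε` a constant works, by the Poincaré
inequality.
-/

namespace BooleanCube

open Finset
open scoped BigOperators

variable {n : ℕ}

section Expectation

lemma cubeExpect_eq_expect (F : (Fin n → Bool) → ℝ) : cubeExpect F = 𝔼 x, F x := by
  simp [cubeExpect, Fintype.expect_eq_sum_div_card]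

lemma cubeExpect_const (c : ℝ) : cubeExpect (fun _ : Fin n → Bool => c) = c := by
  simp [cubeExpect_eq_expect]

lemma cubeExpect_add (F G : (Fin n → Bool) → ℝ) :
    cubeExpect (fun x => F x + G x) = cubeExpect F + cubeExpect G := by
  simp [cubeExpect_eq_expect, expect_add_distrib]

lemma cubeExpect_sub (F G : (Fin n → Bool) → ℝ) :
    cubeExpect (fun x => F x - G x) = cubeExpect F - cubeExpect G := by
  simp [cubeExpect_eq_expect, expect_sub_distrib]

lemma cubeExpect_const_mul (c : ℝ) (F : (Fin n → Bool) → ℝ) :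
    cubeExpect (fun x => c * F x) = c * cubeExpect F := by
  simp [cubeExpect_eq_expect, mul_expect]

lemma cubeExpect_sum {ι : Type*} (s : Finset ι) (F : ι → (Fin n → Bool) → ℝ) :
    cubeExpect (fun x => ∑ j ∈ s, F j x) = ∑ j ∈ s, cubeExpect (F j) := by
  simp [cubeExpect_eq_expect, expect_sum_comm]

lemma cubeExpect_mono {F G : (Fin n → Bool) → ℝ} (h : ∀ x, F x ≤ G x) :
    cubeExpect F ≤ cubeExpect G := by
  simpa [cubeExpect_eq_expect] using expect_le_expect fun x _ => h x

lemma cubeExpect_nonneg {F : (Fin n → Bool) → ℝ} (h : ∀ x, 0 ≤ F x) : 0 ≤ cubeExpect F := by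
  simpa [cubeExpect_eq_expect] using expect_nonneg fun x _ => h x

lemma sq_cubeExpect_mul_le (u v : (Fin n → Bool) → ℝ) :
    cubeExpect (fun x => u x * v x) ^ 2
      ≤ cubeExpect (fun x => u x ^ 2) * cubeExpect (fun x => v x ^ 2) := by
  simpa [cubeExpect_eq_expect] using expect_mul_sq_le_sq_mul_sq univ u v

end Expectation

section Characters

lemma sgn_sq (b : Bool) : sgn b ^ 2 = 1 := by cases b <;> simp [sgn]

lemma sgn_not (b : Bool) : sgn (!b) = -sgn b := by cases b <;> simp [sgn]

lemma flipAt_flipAt (x : Fin n → Bool) (i : Fin n) : flipAt (flipAt x i) i = x := by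
  simp [flipAt]

lemma flipAt_apply_self (x : Fin n → Bool) (i : Fin n) : flipAt x i i = !x i := by
  simp [flipAt]

lemma flipAt_apply_of_ne (x : Fin n → Bool) {i j : Fin n} (h : j ≠ i) : flipAt x i j = x j := by
  simp [flipAt, h]

lemma cubeExpect_comp_flipAt (F : (Fin n → Bool) → ℝ) (i : Fin n) :
    cubeExpect (fun x => F (flipAt x i)) = cubeExpect F := by
  unfold cubeExpect
  congr 1
  exact Fintype.sum_equiv ⟨(flipAt · i), (flipAt · i), (flipAt_flipAt · i), (flipAt_flipAt · i)⟩
    _ _ fun _ => rfl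

lemma cubeExpect_eq_zero_of_flipAt_eq_neg {F : (Fin n → Bool) → ℝ} (i : Fin n)
    (h : ∀ x, F (flipAt x i) = -F x) : cubeExpect F = 0 := by
  have hneg : cubeExpect F = -cubeExpect F :=
    calc cubeExpect F = cubeExpect (fun x => F (flipAt x i)) := (cubeExpect_comp_flipAt F i).symm
      _ = -cubeExpect F := by simp [h, cubeExpect_eq_expect, expect_neg_distrib]
  linarith

lemma chi_flipAt (S : Finset (Fin n)) (x : Fin n → Bool) (i : Fin n) :
    chi S (flipAt x i) = (if i ∈ S then -1 else 1) * chi S x := by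
  split_ifs with hi
  · rw [chi, chi, ← mul_prod_erase S _ hi, ← mul_prod_erase S (fun j => sgn (x j)) hi,
      flipAt_apply_self, sgn_not, neg_one_mul, neg_mul]
    congr 2
    exact prod_congr rfl fun j hj => by rw [flipAt_apply_of_ne _ (ne_of_mem_erase hj)]
  · rw [one_mul]
    exact prod_congr rfl fun j hj => by rw [flipAt_apply_of_ne _ (ne_of_mem_of_not_mem hj hi)]

lemma chi_insert {a : Fin n} {S : Finset (Fin n)} (ha : a ∉ S) (x : Fin n → Bool) :
    chi (insert a S) x = sgn (x a) * chi S x :=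
  prod_insert ha

lemma chi_mul_self (S : Finset (Fin n)) (x : Fin n → Bool) : chi S x * chi S x = 1 := by
  rw [chi, ← prod_mul_distrib]
  exact prod_eq_one fun i _ => by rw [← sq, sgn_sq]

lemma cubeExpect_chi_mul_chi (S T : Finset (Fin n)) :
    cubeExpect (fun x => chi S x * chi T x) = if S = T then 1 else 0 := by
  split_ifs with h
  · simp [h, chi_mul_self, cubeExpect_const]
  · obtain ⟨i, hi⟩ : (symmDiff S T).Nonempty :=
      nonempty_iff_ne_empty.mpr (mt symmDiff_eq_empty.mp h)
    apply cubeExpect_eq_zero_of_flipAt_eq_neg i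
    intro x
    rw [chi_flipAt, chi_flipAt]
    rcases mem_symmDiff.mp hi with ⟨hS, hT⟩ | ⟨hT, hS⟩ <;> simp [hS, hT]

/-- The left side is `∏_i (1 + x_i y_i)`. -/
lemma sum_chi_mul_chi (x y : Fin n → Bool) :
    ∑ S : Finset (Fin n), chi S x * chi S y = if x = y then 2 ^ n else 0 := by
  simp_rw [chi, ← prod_mul_distrib]
  rw [← powerset_univ, ← prod_one_add]
  split_ifs with h
  · simp [h, ← sq, sgn_sq, one_add_one_eq_two]
  · obtain ⟨i, hi⟩ := Function.ne_iff.mp h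
    apply prod_eq_zero (mem_univ i)
    cases hx : x i <;> cases hy : y i <;> simp_all [sgn]

end Characters

section Fourier

def fourierSum (c : Finset (Fin n) → ℝ) (x : Fin n → Bool) : ℝ :=
  ∑ S, c S * chi S x

lemma fourierCoef_fourierSum (c : Finset (Fin n) → ℝ) (T : Finset (Fin n)) :
    fourierCoef (fourierSum c) T = c T := by
  simp_rw [fourierCoef, fourierSum, sum_mul, mul_assoc, cubeExpect_sum, cubeExpect_const_mul,
    cubeExpect_chi_mul_chi]
  simp

lemma fourierSum_fourierCoef (f : (Fin n → Bool) → ℝ) : fourierSum (fourierCoef f) = f := by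
  funext x
  simp_rw [fourierSum, fourierCoef, cubeExpect, div_mul_eq_mul_div, ← sum_div, sum_mul,
    mul_assoc]
  rw [sum_comm]
  simp_rw [← mul_sum, sum_chi_mul_chi]
  simp

lemma cubeExpect_mul_eq_sum_fourierCoef_mul (f g : (Fin n → Bool) → ℝ) :
    cubeExpect (fun x => f x * g x) = ∑ S, fourierCoef f S * fourierCoef g S := by
  conv_lhs => rw [← fourierSum_fourierCoef f]
  simp_rw [fourierSum, sum_mul, mul_assoc, cubeExpect_sum, cubeExpect_const_mul, fourierCoef,
    mul_comm (chi _ _)]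

lemma cubeExpect_sq_eq_sum_sq_fourierCoef (f : (Fin n → Bool) → ℝ) :
    cubeExpect (fun x => f x ^ 2) = ∑ S, fourierCoef f S ^ 2 := by
  simpa [sq] using cubeExpect_mul_eq_sum_fourierCoef_mul f f

lemma fourierCoef_empty (f : (Fin n → Bool) → ℝ) : fourierCoef f ∅ = cubeExpect f := by
  simp [fourierCoef, chi]

lemma fourierCoef_sub (f g : (Fin n → Bool) → ℝ) (S : Finset (Fin n)) :
    fourierCoef (fun x => f x - g x) S = fourierCoef f S - fourierCoef g S := by
  simp_rw [fourierCoef, sub_mul, cubeExpect_sub]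

lemma fourierCoef_const_mul (c : ℝ) (f : (Fin n → Bool) → ℝ) (S : Finset (Fin n)) :
    fourierCoef (fun x => c * f x) S = c * fourierCoef f S := by
  simp_rw [fourierCoef, mul_assoc, cubeExpect_const_mul]

lemma fourierCoef_comp_flipAt (f : (Fin n → Bool) → ℝ) (i : Fin n) (S : Finset (Fin n)) :
    fourierCoef (fun x => f (flipAt x i)) S = (if i ∈ S then -1 else 1) * fourierCoef f S := by
  rw [fourierCoef, ← cubeExpect_comp_flipAt _ i, fourierCoef, ← cubeExpect_const_mul]
  congr 1 with x
  rw [flipAt_flipAt, chi_flipAt, mul_left_comm]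

lemma cubeExpect_sq_sub_fourierSum_eq (f : (Fin n → Bool) → ℝ) (G : Finset (Finset (Fin n))) :
    cubeExpect (fun x => (f x - fourierSum (fun S => if S ∈ G then fourierCoef f S else 0) x) ^ 2)
      = ∑ S ∈ univ.filter (· ∉ G), fourierCoef f S ^ 2 := by
  rw [cubeExpect_sq_eq_sum_sq_fourierCoef, sum_filter]
  refine sum_congr rfl fun S _ => ?_
  rw [fourierCoef_sub, fourierCoef_fourierSum]
  split_ifs <;> simp

lemma fourierSum_eq_of_forall_mem {c : Finset (Fin n) → ℝ} {J : Finset (Fin n)}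
    (hc : ∀ S, c S ≠ 0 → S ⊆ J) {x y : Fin n → Bool} (hxy : ∀ i ∈ J, x i = y i) :
    fourierSum c x = fourierSum c y := by
  refine sum_congr rfl fun S _ => ?_
  by_cases hS : c S = 0
  · simp [hS]
  · rw [chi, chi, prod_congr rfl fun i hi => by rw [hxy i (hc S hS hi)]]

end Fourier

section Influence

def discreteDeriv (i : Fin n) (f : (Fin n → Bool) → ℝ) (x : Fin n → Bool) : ℝ :=
  (f x - f (flipAt x i)) / 2

lemma fourierCoef_discreteDeriv (i : Fin n) (f : (Fin n → Bool) → ℝ) (S : Finset (Fin n)) :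
    fourierCoef (discreteDeriv i f) S = if i ∈ S then fourierCoef f S else 0 := by
  rw [show discreteDeriv i f = fun x => 2⁻¹ * (f x - f (flipAt x i)) from
      funext fun x => div_eq_inv_mul .., fourierCoef_const_mul, fourierCoef_sub,
    fourierCoef_comp_flipAt]
  split_ifs <;> ring

lemma influence_eq_cubeExpect_discreteDeriv_sq (i : Fin n) (f : (Fin n → Bool) → ℝ) :
    influence i f = cubeExpect (fun x => discreteDeriv i f x ^ 2) := by
  rw [cubeExpect_sq_eq_sum_sq_fourierCoef, influence, sum_filter]
  simp_rw [fourierCoef_discreteDeriv]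
  exact sum_congr rfl fun S _ => by split_ifs <;> simp

lemma influence_nonneg (i : Fin n) (f : (Fin n → Bool) → ℝ) : 0 ≤ influence i f :=
  sum_nonneg fun _ _ => sq_nonneg _

lemma discreteDeriv_pow_three {f : (Fin n → Bool) → ℝ} (hf : ∀ x, f x = 1 ∨ f x = -1)
    (i : Fin n) (x : Fin n → Bool) : discreteDeriv i f x ^ 3 = discreteDeriv i f x := by
  rw [discreteDeriv]
  rcases hf x with h | h <;> rcases hf (flipAt x i) with h' | h' <;> rw [h, h'] <;> norm_num

lemma sum_influence_eq_sum_card_mul_sq (f : (Fin n → Bool) → ℝ) :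
    ∑ i, influence i f = ∑ S, (S.card : ℝ) * fourierCoef f S ^ 2 := by
  simp_rw [influence, sum_filter]
  rw [sum_comm]
  refine sum_congr rfl fun S _ => ?_
  rw [sum_ite_mem, univ_inter, sum_const, nsmul_eq_mul]

lemma cubeVar_le_sum_influence (f : (Fin n → Bool) → ℝ) : cubeVar f ≤ ∑ i, influence i f := by
  rw [cubeVar, cubeExpect_sq_eq_sum_sq_fourierCoef, ← fourierCoef_empty,
    ← add_sum_erase _ _ (mem_univ ∅), add_sub_cancel_left, sum_influence_eq_sum_card_mul_sq]
  calc ∑ S ∈ univ.erase ∅, fourierCoef f S ^ 2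
      ≤ ∑ S ∈ univ.erase ∅, (S.card : ℝ) * fourierCoef f S ^ 2 := by
        refine sum_le_sum fun S hS => le_mul_of_one_le_left (sq_nonneg _) ?_
        exact_mod_cast card_pos.mpr (nonempty_iff_ne_empty.mpr (ne_of_mem_erase hS))
    _ ≤ ∑ S, (S.card : ℝ) * fourierCoef f S ^ 2 :=
        sum_le_sum_of_subset_of_nonneg (erase_subset _ _) fun _ _ _ => by positivity

lemma natCast_mul_sum_sq_fourierCoef_card_gt_le (f : (Fin n → Bool) → ℝ) (k : ℕ) :
    k * ∑ S ∈ univ.filter (k < ·.card), fourierCoef f S ^ 2 ≤ ∑ i, influence i f := by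
  rw [sum_influence_eq_sum_card_mul_sq, mul_sum]
  calc ∑ S ∈ univ.filter (k < ·.card), (k : ℝ) * fourierCoef f S ^ 2
      ≤ ∑ S ∈ univ.filter (k < ·.card), (S.card : ℝ) * fourierCoef f S ^ 2 := by
        refine sum_le_sum fun S hS => mul_le_mul_of_nonneg_right ?_ (sq_nonneg _)
        exact_mod_cast (mem_filter.mp hS).2.le
    _ ≤ ∑ S, (S.card : ℝ) * fourierCoef f S ^ 2 :=
        sum_le_sum_of_subset_of_nonneg (filter_subset _ _) fun _ _ _ => by positivity

end Influence

section Bonami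

lemma sum_finset_eq_sum_powerset_erase {α : Type*} [Fintype α] [DecidableEq α] (a : α)
    (F : Finset α → ℝ) : ∑ S, F S = ∑ S ∈ (univ.erase a).powerset, (F S + F (insert a S)) := by
  rw [sum_add_distrib, ← sum_powerset_insert (notMem_erase a univ), insert_erase (mem_univ a),
    powerset_univ]

/-- `fourierSum (avgCoeffs a c)` is the average of `fourierSum c` over the coordinate `a`. -/
def avgCoeffs (a : Fin n) (c : Finset (Fin n) → ℝ) (S : Finset (Fin n)) : ℝ :=
  if a ∈ S then 0 else c S

/-- `fourierSum (derivCoeffs a c)` is the derivative of `fourierSum c` in the coordinate `a`. -/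
def derivCoeffs (a : Fin n) (c : Finset (Fin n) → ℝ) (S : Finset (Fin n)) : ℝ :=
  if a ∈ S then 0 else c (insert a S)

lemma fourierSum_eq_avg_add_sgn_mul_deriv (a : Fin n) (c : Finset (Fin n) → ℝ)
    (x : Fin n → Bool) :
    fourierSum c x
      = fourierSum (avgCoeffs a c) x + sgn (x a) * fourierSum (derivCoeffs a c) x := by
  simp only [fourierSum, sum_finset_eq_sum_powerset_erase a, mul_sum, ← sum_add_distrib]
  refine sum_congr rfl fun S hS => ?_
  have ha : a ∉ S := fun h => notMem_erase a univ (mem_powerset.mp hS h)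
  simp [avgCoeffs, derivCoeffs, ha, chi_insert ha]
  ring

lemma sum_sq_eq_sum_sq_avg_add_sum_sq_deriv (a : Fin n) (c : Finset (Fin n) → ℝ) :
    ∑ S, c S ^ 2 = ∑ S, avgCoeffs a c S ^ 2 + ∑ S, derivCoeffs a c S ^ 2 := by
  simp only [sum_finset_eq_sum_powerset_erase a, ← sum_add_distrib]
  refine sum_congr rfl fun S hS => ?_
  have ha : a ∉ S := fun h => notMem_erase a univ (mem_powerset.mp hS h)
  simp [avgCoeffs, derivCoeffs, ha]

lemma fourierSum_flipAt {a : Fin n} {c : Finset (Fin n) → ℝ} (hc : ∀ S, a ∈ S → c S = 0)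
    (x : Fin n → Bool) : fourierSum c (flipAt x a) = fourierSum c x := by
  refine sum_congr rfl fun S _ => ?_
  by_cases ha : a ∈ S <;> simp [chi_flipAt, ha, hc]

/-- The cross terms with an odd power of `x_a` have mean zero. -/
lemma cubeExpect_add_sgn_mul_pow_four {a : Fin n} {q r : (Fin n → Bool) → ℝ}
    (hq : ∀ x, q (flipAt x a) = q x) (hr : ∀ x, r (flipAt x a) = r x) :
    cubeExpect (fun x => (q x + sgn (x a) * r x) ^ 4)
      = cubeExpect (fun x => q x ^ 4) + 6 * cubeExpect (fun x => q x ^ 2 * r x ^ 2)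
        + cubeExpect (fun x => r x ^ 4) := by
  have hodd : cubeExpect (fun x => sgn (x a) * (4 * q x ^ 3 * r x + 4 * q x * r x ^ 3)) = 0 :=
    cubeExpect_eq_zero_of_flipAt_eq_neg a fun x => by
      rw [hq, hr, flipAt_apply_self, sgn_not, neg_mul]
  have hexpand : ∀ x, (q x + sgn (x a) * r x) ^ 4
      = q x ^ 4 + 6 * (q x ^ 2 * r x ^ 2) + r x ^ 4
        + sgn (x a) * (4 * q x ^ 3 * r x + 4 * q x * r x ^ 3) := fun x => by
    linear_combination (6 * q x ^ 2 * r x ^ 2 + 4 * q x * r x ^ 3 * sgn (x a)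
      + r x ^ 4 * (sgn (x a) ^ 2 + 1)) * sgn_sq (x a)
  simp only [hexpand, cubeExpect_add, hodd, add_zero, cubeExpect_const_mul]

lemma bonami_induction_step {K A B M α β : ℝ} (hK : 0 ≤ K) (hα : 0 ≤ α) (hβ : 0 ≤ β)
    (hB : 0 ≤ B) (hM : 0 ≤ M) (hAK : A ≤ K * α ^ 2) (hBK : 9 * B ≤ K * β ^ 2)
    (hMAB : M ^ 2 ≤ A * B) : A + 6 * M + B ≤ K * (α + β) ^ 2 := by
  have hM' : M ≤ K * α * β / 3 := by
    refine (pow_le_pow_iff_left₀ hM (by positivity) two_ne_zero).mp ?_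
    calc M ^ 2 ≤ A * B := hMAB
      _ ≤ K * α ^ 2 * (K * β ^ 2 / 9) :=
        mul_le_mul hAK (by linarith) hB (by positivity)
      _ = (K * α * β / 3) ^ 2 := by ring
  nlinarith [mul_nonneg hK (sq_nonneg β)]

lemma avgCoeffs_ne_zero {a : Fin n} {c : Finset (Fin n) → ℝ} {S : Finset (Fin n)}
    (h : avgCoeffs a c S ≠ 0) : a ∉ S ∧ c S ≠ 0 := by
  have ha : a ∉ S := fun haS => h (if_pos haS)
  exact ⟨ha, by simpa [avgCoeffs, ha] using h⟩

lemma derivCoeffs_ne_zero {a : Fin n} {c : Finset (Fin n) → ℝ} {S : Finset (Fin n)}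
    (h : derivCoeffs a c S ≠ 0) : a ∉ S ∧ c (insert a S) ≠ 0 := by
  have ha : a ∉ S := fun haS => h (if_pos haS)
  exact ⟨ha, by simpa [derivCoeffs, ha] using h⟩

lemma cubeExpect_fourierSum_pow_four_le_of_avg_deriv {a : Fin n} {c : Finset (Fin n) → ℝ}
    {K : ℝ} (hK : 0 ≤ K)
    (hA : cubeExpect (fun x => fourierSum (avgCoeffs a c) x ^ 4)
      ≤ K * (∑ S, avgCoeffs a c S ^ 2) ^ 2)
    (hB : 9 * cubeExpect (fun x => fourierSum (derivCoeffs a c) x ^ 4)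
      ≤ K * (∑ S, derivCoeffs a c S ^ 2) ^ 2) :
    cubeExpect (fun x => fourierSum c x ^ 4) ≤ K * (∑ S, c S ^ 2) ^ 2 := by
  set q := fourierSum (avgCoeffs a c)
  set r := fourierSum (derivCoeffs a c)
  have hq : ∀ x, q (flipAt x a) = q x := fourierSum_flipAt fun S h => if_pos h
  have hr : ∀ x, r (flipAt x a) = r x := fourierSum_flipAt fun S h => if_pos h
  have hM : cubeExpect (fun x => q x ^ 2 * r x ^ 2) ^ 2
      ≤ cubeExpect (fun x => q x ^ 4) * cubeExpect (fun x => r x ^ 4) := by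
    convert sq_cubeExpect_mul_le (fun x => q x ^ 2) (fun x => r x ^ 2) using 3 <;>
      exact funext fun x => by ring
  have hsplit : (fun x => fourierSum c x ^ 4) = fun x => (q x + sgn (x a) * r x) ^ 4 :=
    funext fun x => by rw [fourierSum_eq_avg_add_sgn_mul_deriv a c]
  rw [hsplit, cubeExpect_add_sgn_mul_pow_four hq hr, sum_sq_eq_sum_sq_avg_add_sum_sq_deriv a c]
  exact bonami_induction_step hK (sum_nonneg fun _ _ => sq_nonneg _)
    (sum_nonneg fun _ _ => sq_nonneg _) (cubeExpect_nonneg fun x => by positivity)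
    (cubeExpect_nonneg fun x => by positivity) hA hB hM

/-- Bonami's lemma. Induct on the coordinates that occur: for `p = q + x_a r`, the terms odd in
`x_a` have mean zero and Cauchy–Schwarz bounds `E[q² r²]`. -/
theorem cubeExpect_fourierSum_pow_four_le {k : ℕ} {c : Finset (Fin n) → ℝ}
    (hc : ∀ S, c S ≠ 0 → S.card ≤ k) :
    cubeExpect (fun x => fourierSum c x ^ 4) ≤ 9 ^ k * (∑ S, c S ^ 2) ^ 2 := by
  obtain ⟨T, hT⟩ : ∃ T : Finset (Fin n), ∀ S, c S ≠ 0 → S ⊆ T :=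
    ⟨univ, fun S _ => subset_univ S⟩
  induction T using Finset.induction_on generalizing k c with
  | empty =>
    have hconst : ∀ x, fourierSum c x = c ∅ := fun x => by
      rw [fourierSum, sum_eq_single ∅ (fun S _ hS => ?_) (by simp)]
      · simp [chi]
      · by_contra h
        exact hS (subset_empty.mp (hT S (left_ne_zero_of_mul h)))
    have hc_empty : c ∅ ^ 2 ≤ ∑ S, c S ^ 2 :=
      single_le_sum (fun S _ => sq_nonneg (c S)) (mem_univ ∅)
    simp only [hconst, cubeExpect_const]
    calc c ∅ ^ 4 = (c ∅ ^ 2) ^ 2 := by ring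
      _ ≤ (∑ S, c S ^ 2) ^ 2 := pow_le_pow_left₀ (sq_nonneg _) hc_empty 2
      _ ≤ 9 ^ k * (∑ S, c S ^ 2) ^ 2 :=
        le_mul_of_one_le_left (sq_nonneg _) (one_le_pow₀ (by norm_num))
  | @insert a T _ ih =>
    refine cubeExpect_fourierSum_pow_four_le_of_avg_deriv (a := a) (by positivity) ?_ ?_
    · refine ih (fun S hS => hc S (avgCoeffs_ne_zero hS).2) fun S hS => ?_
      obtain ⟨haS, hcS⟩ := avgCoeffs_ne_zero hS
      exact (subset_insert_iff_of_notMem haS).mp (hT S hcS)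
    · have hsupp : ∀ S, derivCoeffs a c S ≠ 0 → S ⊆ T ∧ S.card + 1 ≤ k := fun S hS => by
        obtain ⟨haS, hcS⟩ := derivCoeffs_ne_zero hS
        exact ⟨(subset_insert_iff_of_notMem haS).mp ((subset_insert a S).trans (hT _ hcS)),
          card_insert_of_notMem haS ▸ hc _ hcS⟩
      cases k with
      | zero =>
        have hzero : derivCoeffs a c = 0 := funext fun S => by_contra fun h => by
          simpa using (hsupp S h).2
        simp [hzero, fourierSum, cubeExpect_const]
      | succ k =>
        have := ih (fun S hS => Nat.le_of_succ_le_succ (hsupp S hS).2) fun S hS => (hsupp S hS).1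
        rw [pow_succ']
        linarith

end Bonami

section LowDegreeWeight

def lowDegreeWeight (i : Fin n) (k : ℕ) (f : (Fin n → Bool) → ℝ) : ℝ :=
  ∑ S ∈ univ.filter (fun S => i ∈ S ∧ S.card ≤ k), fourierCoef f S ^ 2

lemma lowDegreeWeight_nonneg (i : Fin n) (k : ℕ) (f : (Fin n → Bool) → ℝ) :
    0 ≤ lowDegreeWeight i k f :=
  sum_nonneg fun _ _ => sq_nonneg _

/-- With `g = D_i f` and `p` the degree-`≤ k` part of `g`, we have `W = E[g p]`; as
`g ∈ {-1, 0, 1}`, two Cauchy–Schwarz steps and Bonami's lemma give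
`W⁴ ≤ E[g²]³ · E[p⁴] ≤ Inf_i(f)³ · 9^k W²`. -/
theorem sq_lowDegreeWeight_le {f : (Fin n → Bool) → ℝ} (hf : ∀ x, f x = 1 ∨ f x = -1)
    (i : Fin n) (k : ℕ) : lowDegreeWeight i k f ^ 2 ≤ 9 ^ k * influence i f ^ 3 := by
  set W := lowDegreeWeight i k f
  set α := influence i f
  set g := discreteDeriv i f
  set c : Finset (Fin n) → ℝ := fun S => if i ∈ S ∧ S.card ≤ k then fourierCoef f S else 0
  set p := fourierSum c
  have hα : α = cubeExpect (fun x => g x ^ 2) := influence_eq_cubeExpect_discreteDeriv_sq i f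
  have hg3 : ∀ x, g x ^ 3 = g x := discreteDeriv_pow_three hf i
  have hg4 : ∀ x, g x ^ 4 = g x ^ 2 := fun x => by rw [pow_succ, hg3, sq]
  have hWc : W = ∑ S, c S ^ 2 := by
    simp only [W, lowDegreeWeight, sum_filter]
    exact sum_congr rfl fun S _ => by simp only [c]; split_ifs <;> simp
  have hWgp : W = cubeExpect (fun x => g x * p x) := by
    rw [cubeExpect_mul_eq_sum_fourierCoef_mul, hWc]
    refine sum_congr rfl fun S _ => ?_
    rw [fourierCoef_discreteDeriv, fourierCoef_fourierSum]
    by_cases hS : i ∈ S <;> by_cases hk : S.card ≤ k <;> simp [c, hS, hk, sq]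
  have hstep1 : W ^ 2 ≤ α * cubeExpect (fun x => g x ^ 2 * p x ^ 2) := by
    have := sq_cubeExpect_mul_le g (fun x => g x ^ 2 * p x)
    simp only [mul_pow, ← pow_mul, Nat.reduceMul, hg4, ← mul_assoc, ← pow_succ', hg3] at this
    rwa [hWgp, hα]
  have hstep2 :
      cubeExpect (fun x => g x ^ 2 * p x ^ 2) ^ 2 ≤ α * cubeExpect (fun x => p x ^ 4) := by
    have := sq_cubeExpect_mul_le (fun x => g x ^ 2) (fun x => p x ^ 2)
    simp only [← pow_mul, Nat.reduceMul, hg4] at this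
    rwa [hα]
  have hstep3 : cubeExpect (fun x => p x ^ 4) ≤ 9 ^ k * W ^ 2 := by
    rw [hWc]
    refine cubeExpect_fourierSum_pow_four_le fun S hS => ?_
    by_contra hk
    simp [c, hk] at hS
  have hα0 : 0 ≤ α := influence_nonneg i f
  have hW4 : W ^ 2 * W ^ 2 ≤ 9 ^ k * α ^ 3 * W ^ 2 := by
    calc W ^ 2 * W ^ 2 ≤ (α * cubeExpect (fun x => g x ^ 2 * p x ^ 2)) ^ 2 := by
          rw [← sq]; exact pow_le_pow_left₀ (sq_nonneg W) hstep1 2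
      _ = α ^ 2 * cubeExpect (fun x => g x ^ 2 * p x ^ 2) ^ 2 := by ring
      _ ≤ α ^ 2 * (α * (9 ^ k * W ^ 2)) := by gcongr; exact hstep2.trans (by gcongr)
      _ = 9 ^ k * α ^ 3 * W ^ 2 := by ring
  rcases (sq_nonneg W).eq_or_lt with hW | hW
  · rw [← hW]; exact mul_nonneg (by positivity) (pow_nonneg hα0 3)
  · exact le_of_mul_le_mul_right hW4 hW

lemma lowDegreeWeight_le_of_influence_le {f : (Fin n → Bool) → ℝ}
    (hf : ∀ x, f x = 1 ∨ f x = -1) {i : Fin n} {σ : ℝ} (hσ : 0 ≤ σ)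
    (hi : influence i f ≤ σ ^ 2) (k : ℕ) :
    lowDegreeWeight i k f ≤ 3 ^ k * σ * influence i f := by
  have hα := influence_nonneg i f
  refine (pow_le_pow_iff_left₀ (lowDegreeWeight_nonneg i k f) (by positivity) two_ne_zero).mp ?_
  calc lowDegreeWeight i k f ^ 2 ≤ 9 ^ k * influence i f ^ 3 := sq_lowDegreeWeight_le hf i k
    _ = 9 ^ k * influence i f ^ 2 * influence i f := by ring
    _ ≤ 9 ^ k * influence i f ^ 2 * σ ^ 2 := by gcongr
    _ = (3 ^ k * σ * influence i f) ^ 2 := by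
        rw [show (9 : ℝ) ^ k = (3 ^ k) ^ 2 by rw [← pow_mul, mul_comm, pow_mul]; norm_num]
        ring

lemma sum_sq_fourierCoef_not_subset_le (f : (Fin n → Bool) → ℝ) (J : Finset (Fin n)) (k : ℕ) :
    ∑ S ∈ univ.filter (fun S => ¬S ⊆ J ∧ S.card ≤ k), fourierCoef f S ^ 2
      ≤ ∑ i ∈ univ.filter (· ∉ J), lowDegreeWeight i k f := by
  simp only [lowDegreeWeight, sum_filter (fun S => _ ∈ S ∧ _)]
  rw [sum_comm, sum_filter]
  refine sum_le_sum fun S _ => ?_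
  split_ifs with hS
  · obtain ⟨i, hiS, hiJ⟩ := not_subset.mp hS.1
    calc fourierCoef f S ^ 2 = if i ∈ S ∧ S.card ≤ k then fourierCoef f S ^ 2 else 0 := by
          simp [hiS, hS.2]
      _ ≤ ∑ j ∈ univ.filter (· ∉ J), if j ∈ S ∧ S.card ≤ k then fourierCoef f S ^ 2 else 0 :=
          single_le_sum (f := fun j => if j ∈ S ∧ S.card ≤ k then fourierCoef f S ^ 2 else 0)
            (fun j _ => by positivity) (by simpa using hiJ)
  · exact sum_nonneg fun j _ => by positivity

end LowDegreeWeight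

section Junta

def influentialCoords (τ : ℝ) (f : (Fin n → Bool) → ℝ) : Finset (Fin n) :=
  univ.filter (τ ≤ influence · f)

lemma card_influentialCoords_mul_le (τ : ℝ) (f : (Fin n → Bool) → ℝ) :
    (influentialCoords τ f).card * τ ≤ ∑ i, influence i f := by
  calc (influentialCoords τ f).card * τ = ∑ _i ∈ influentialCoords τ f, τ := by simp
    _ ≤ ∑ i ∈ influentialCoords τ f, influence i f :=
        sum_le_sum fun i hi => (mem_filter.mp hi).2
    _ ≤ ∑ i, influence i f :=
        sum_le_sum_of_subset_of_nonneg (subset_univ _) fun i _ _ => influence_nonneg i f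

lemma abs_sub_sign_le_two_mul_sq {y : ℝ} (hy : y = 1 ∨ y = -1) (z : ℝ) :
    |y - if 0 ≤ z then 1 else -1| ≤ 2 * (y - z) ^ 2 := by
  rcases hy with rfl | rfl <;> split_ifs <;> rw [abs_le] <;> constructor <;> nlinarith

theorem exists_junta_approx {f : (Fin n → Bool) → ℝ} (hf : ∀ x, f x = 1 ∨ f x = -1)
    {k : ℕ} (hk : 0 < k) {σ : ℝ} (hσ : 0 ≤ σ) :
    ∃ g : (Fin n → Bool) → ℝ, (∀ x, g x = 1 ∨ g x = -1) ∧
      (∀ x y, (∀ i ∈ influentialCoords (σ ^ 2) f, x i = y i) → g x = g y) ∧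
      cubeExpect (fun x => |f x - g x|)
        ≤ 2 * ((∑ i, influence i f) / k + 3 ^ k * σ * ∑ i, influence i f) := by
  set J := influentialCoords (σ ^ 2) f
  set G := univ.filter (fun S : Finset (Fin n) => S ⊆ J ∧ S.card ≤ k)
  set h := fourierSum (fun S => if S ∈ G then fourierCoef f S else 0)
  have hsupp : ∀ S, (if S ∈ G then fourierCoef f S else 0) ≠ 0 → S ⊆ J := fun S hS => by
    by_contra hSJ
    simp [G, hSJ] at hS
  have htail : ∑ S ∈ univ.filter (k < ·.card), fourierCoef f S ^ 2 ≤ (∑ i, influence i f) / k :=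
    (le_div_iff₀' (by exact_mod_cast hk)).mpr (natCast_mul_sum_sq_fourierCoef_card_gt_le f k)
  have hlow : ∑ S ∈ univ.filter (fun S => ¬S ⊆ J ∧ S.card ≤ k), fourierCoef f S ^ 2
      ≤ 3 ^ k * σ * ∑ i, influence i f := by
    refine (sum_sq_fourierCoef_not_subset_le f J k).trans ?_
    rw [mul_sum]
    refine (sum_le_sum fun i hi => lowDegreeWeight_le_of_influence_le hf hσ ?_ k).trans ?_
    · exact (by simpa [J, influentialCoords] using hi : influence i f < σ ^ 2).le
    · exact sum_le_sum_of_subset_of_nonneg (subset_univ _) fun i _ _ =>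
        mul_nonneg (by positivity) (influence_nonneg i f)
  have hsplit : univ.filter (· ∉ G)
      = univ.filter (k < ·.card) ∪ univ.filter (fun S => ¬S ⊆ J ∧ S.card ≤ k) := by
    ext S
    by_cases hSJ : S ⊆ J <;> simp [G, hSJ, lt_or_ge]
  have hdisj : Disjoint (univ.filter (k < ·.card))
      (univ.filter (fun S : Finset (Fin n) => ¬S ⊆ J ∧ S.card ≤ k)) :=
    disjoint_filter.mpr fun S _ hk hS => hS.2.not_gt hk
  refine ⟨fun x => if 0 ≤ h x then 1 else -1, fun x => by dsimp only; split_ifs <;> simp,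
    fun x y hxy => by simp only [h, fourierSum_eq_of_forall_mem hsupp hxy], ?_⟩
  calc cubeExpect (fun x => |f x - if 0 ≤ h x then 1 else -1|)
      ≤ 2 * cubeExpect (fun x => (f x - h x) ^ 2) := by
        rw [← cubeExpect_const_mul]
        exact cubeExpect_mono fun x => abs_sub_sign_le_two_mul_sq (hf x) (h x)
    _ = 2 * ∑ S ∈ univ.filter (· ∉ G), fourierCoef f S ^ 2 := by
        rw [cubeExpect_sq_sub_fourierSum_eq]
    _ = 2 * (∑ S ∈ univ.filter (k < ·.card), fourierCoef f S ^ 2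
          + ∑ S ∈ univ.filter (fun S => ¬S ⊆ J ∧ S.card ≤ k), fourierCoef f S ^ 2) := by
        rw [hsplit, sum_union hdisj]
    _ ≤ 2 * ((∑ i, influence i f) / k + 3 ^ k * σ * ∑ i, influence i f) := by
        linarith

theorem exists_const_approx {f : (Fin n → Bool) → ℝ} (hf : ∀ x, f x = 1 ∨ f x = -1) :
    ∃ s : ℝ, (s = 1 ∨ s = -1) ∧ cubeExpect (fun x => |f x - s|) ≤ ∑ i, influence i f := by
  set μ := cubeExpect f
  have hμ : |μ| ≤ 1 := abs_le.mpr
    ⟨(cubeExpect_const (-1)).symm.trans_le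
        (cubeExpect_mono fun x => by rcases hf x with h | h <;> simp [h]),
      (cubeExpect_mono fun x => by rcases hf x with h | h <;> simp [h]).trans_eq
        (cubeExpect_const 1)⟩
  have hvar : cubeVar f = 1 - μ ^ 2 := by
    rw [cubeVar, ← cubeExpect_const (n := n) 1]
    congr 2 with x
    rcases hf x with h | h <;> simp [h]
  refine ⟨if 0 ≤ μ then 1 else -1, by split_ifs <;> simp, ?_⟩
  calc cubeExpect (fun x => |f x - if 0 ≤ μ then 1 else -1|)
      = cubeExpect (fun x => 1 - (if 0 ≤ μ then 1 else -1) * f x) := by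
        congr 1 with x
        rcases hf x with h | h <;> split_ifs <;> norm_num [h]
    _ = 1 - |μ| := by
        rw [cubeExpect_sub, cubeExpect_const, cubeExpect_const_mul]
        split_ifs with h
        · rw [abs_of_nonneg h, one_mul]
        · rw [abs_of_neg (not_le.mp h)]; ring
    _ ≤ 1 - μ ^ 2 := by nlinarith [abs_nonneg μ, sq_abs μ]
    _ ≤ ∑ i, influence i f := hvar ▸ cubeVar_le_sum_influence f

lemma sixteen_mul_nine_pow_mul_pow_three_le_exp {t : ℝ} {k : ℕ} (ht : 1 ≤ t)
    (hk : (k : ℝ) ≤ 4 * t + 1) : 16 * 9 ^ k * t ^ 3 ≤ Real.exp (21 * t) := by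
  have he3 : 16 ≤ Real.exp 3 :=
    calc (16 : ℝ) ≤ 2.7182818283 ^ 3 := by norm_num
      _ ≤ Real.exp 1 ^ 3 := pow_le_pow_left₀ (by norm_num) Real.exp_one_gt_d9.le 3
      _ = Real.exp 3 := by rw [← Real.exp_nat_mul]; norm_num
  have h9 : (9 : ℝ) ^ k ≤ Real.exp (3 * (4 * t + 1)) := by
    calc (9 : ℝ) ^ k ≤ Real.exp 3 ^ k := pow_le_pow_left₀ (by norm_num) (by linarith) k
      _ = Real.exp (3 * k) := by rw [← Real.exp_nat_mul, mul_comm]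
      _ ≤ Real.exp (3 * (4 * t + 1)) := Real.exp_le_exp.mpr (by linarith)
  have ht3 : t ^ 3 ≤ Real.exp (3 * t) := by
    calc t ^ 3 ≤ Real.exp t ^ 3 :=
          pow_le_pow_left₀ (by linarith) (by linarith [Real.add_one_le_exp t]) 3
      _ = Real.exp (3 * t) := by rw [← Real.exp_nat_mul]; norm_num
  calc 16 * 9 ^ k * t ^ 3 ≤ Real.exp 3 * Real.exp (3 * (4 * t + 1)) * Real.exp (3 * t) := by
        gcongr
    _ = Real.exp (15 * t + 6) := by rw [← Real.exp_add, ← Real.exp_add]; ring_nf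
    _ ≤ Real.exp (21 * t) := Real.exp_le_exp.mpr (by linarith)

lemma exists_junta_parameters {I ε : ℝ} (hε : 0 < ε) (hε1 : ε ≤ 1) (hεI : ε < I) :
    ∃ (k : ℕ) (σ : ℝ), 0 < k ∧ 0 < σ ∧ I / σ ^ 2 ≤ Real.exp (21 * I / ε) ∧
      2 * (I / k + 3 ^ k * σ * I) ≤ ε := by
  set t := I / ε
  set k := ⌈4 * t⌉₊
  have hI : 0 < I := hε.trans hεI
  have ht : 1 ≤ t := (one_le_div hε).mpr hεI.le
  have hk : 4 * t ≤ k := Nat.le_ceil _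
  have hk' : (k : ℝ) ≤ 4 * t + 1 := (Nat.ceil_lt_add_one (by positivity)).le
  refine ⟨k, ε / (4 * 3 ^ k * I), by exact_mod_cast (by linarith : (0 : ℝ) < k),
    by positivity, ?_, ?_⟩
  · calc I / (ε / (4 * 3 ^ k * I)) ^ 2 = 16 * 9 ^ k * t ^ 3 * ε := by
          rw [show (9 : ℝ) ^ k = (3 ^ k) ^ 2 by rw [← pow_mul, mul_comm, pow_mul]; norm_num]
          simp only [t]
          field_simp
          norm_num
      _ ≤ 16 * 9 ^ k * t ^ 3 := mul_le_of_le_one_right (by positivity) hε1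
      _ ≤ Real.exp (21 * t) := sixteen_mul_nine_pow_mul_pow_three_le_exp ht hk'
      _ = Real.exp (21 * I / ε) := by rw [mul_div_assoc]
  · have htail : I / k ≤ ε / 4 :=
      calc I / k ≤ I / (4 * t) := div_le_div_of_nonneg_left hI.le (by positivity) hk
        _ = ε / 4 := by simp only [t]; field_simp
    have hlow : 3 ^ k * (ε / (4 * 3 ^ k * I)) * I = ε / 4 := by field_simp
    linarith

end Junta

end BooleanCube

open BooleanCube

/-- **Friedgut's junta theorem**: there is a universal constant `C > 0` such that for every
`n ≥ 1`, every `f : {-1,1}^n → {-1,1}` and every `ε ∈ (0,1)`, there are a set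
`J ⊆ {1,…,n}` with `|J| ≤ exp(C·Inf(f)/ε)` and a function `g : {-1,1}^n → {-1,1}`
depending only on the coordinates in `J` with `E|f − g| ≤ ε`.
Here `Inf(f) = Σ_i Inf_i(f)` is the total influence. -/
theorem friedgut_junta :
    ∃ C : ℝ, 0 < C ∧
      ∀ n : ℕ, 1 ≤ n → ∀ f : (Fin n → Bool) → ℝ, (∀ x, f x = 1 ∨ f x = -1) →
        ∀ ε : ℝ, 0 < ε → ε < 1 →
          ∃ J : Finset (Fin n),
            (J.card : ℝ) ≤ Real.exp (C * (∑ i : Fin n, influence i f) / ε) ∧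
            ∃ g : (Fin n → Bool) → ℝ, (∀ x, g x = 1 ∨ g x = -1) ∧
              (∀ x y, (∀ i ∈ J, x i = y i) → g x = g y) ∧
              cubeExpect (fun x => |f x - g x|) ≤ ε := by
  refine ⟨21, by norm_num, fun n _ f hf ε hε hε1 => ?_⟩
  rcases le_or_gt (∑ i, influence i f) ε with hIε | hεI
  · obtain ⟨s, hs, hfs⟩ := exists_const_approx hf
    exact ⟨∅, by simp [(Real.exp_pos _).le], fun _ => s, fun _ => hs, fun _ _ _ => rfl,
      hfs.trans hIε⟩
  obtain ⟨k, σ, hk, hσ, hcard, herr⟩ := exists_junta_parameters hε hε1.le hεI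
  obtain ⟨g, hg, hgJ, hfg⟩ := exists_junta_approx hf hk hσ.le
  refine ⟨influentialCoords (σ ^ 2) f, ?_, g, hg, hgJ, hfg.trans herr⟩
  exact ((le_div_iff₀ (by positivity)).mpr (card_influentialCoords_mul_le _ f)).trans hcard
end
end
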